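/- arXiv:2003.04108 — 2 statements merged into one kernel-verified Lean document; each statement's English description precedes it below -/
import Mathlib

section
/- For all policies π and π' of a finite discounted MDP, J(π') ≥ L_π(π') − ε^π · D_TV(d^{π'}_ρ ‖ d^π_ρ), where ε^π = max_{s∈S} |∑_{a∈A} π'(a|s) A^π(s,a)|. -/
open Finset

noncomputable section

variable {S A : Type*} [Fintype S] [Fintype A]

/-- The t-step state distribution of policy `π` started from `ρ`. -/
def stateDist (P : S → A → S → ℝ) (π : S → A → ℝ) (ρ : S → ℝ) : ℕ → S → ℝ
  | 0 => ρ
  | t + 1 => fun s' => ∑ s, ∑ a, stateDist P π ρ t s * π s a * P s a s'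

/-- The discounted state visitation distribution `d^π_ρ`. -/
def dvisit (P : S → A → S → ℝ) (π : S → A → ℝ) (ρ : S → ℝ) (γ : ℝ) (s : S) : ℝ :=
  (1 - γ) * ∑' t : ℕ, γ ^ t * stateDist P π ρ t s

/-- Total variation distance between real-valued functions on a finite set. -/
def dTV {X : Type*} [Fintype X] (p q : X → ℝ) : ℝ := ∑ x, |p x - q x|

/-!
By the Bellman equation of `π'`, the expected advantage `∑_a π'(a|s) A(s,a)` computed from `V` is
`h s - γ (P_{π'} h) s` with `h = V' - V`, so its discounted sum along the state distributions of
`π'` telescopes to `∑ ρ h`; this is the performance difference identity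
`J(π') - (1 - γ) ∑ ρ V = ∑_s d^{π'}_ρ(s) ∑_a π'(a|s) A(s,a)`. The surrogate weights the same
expected advantage with `d^π_ρ` instead of `d^{π'}_ρ`, and that swap costs at most its largest
absolute value times the total variation distance of the two visitation distributions.
-/

section StateDistribution

variable (P : S → A → S → ℝ) (π : S → A → ℝ) (ρ : S → ℝ)

lemma stateDist_nonneg (hP0 : ∀ s a s', 0 ≤ P s a s') (hρ0 : ∀ s, 0 ≤ ρ s)
    (hπ0 : ∀ s a, 0 ≤ π s a) (t : ℕ) (s : S) : 0 ≤ stateDist P π ρ t s := by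
  induction t generalizing s with
  | zero => exact hρ0 s
  | succ t ih =>
    exact sum_nonneg fun s₀ _ => sum_nonneg fun a _ =>
      mul_nonneg (mul_nonneg (ih s₀) (hπ0 s₀ a)) (hP0 s₀ a s)

lemma sum_stateDist_mul_succ (f : S → ℝ) (t : ℕ) :
    ∑ s', stateDist P π ρ (t + 1) s' * f s'
      = ∑ s, stateDist P π ρ t s * ∑ a, π s a * ∑ s', P s a s' * f s' := by
  simp only [stateDist, sum_mul, mul_sum]
  rw [sum_comm]
  refine sum_congr rfl fun s _ => ?_
  rw [sum_comm]
  exact sum_congr rfl fun a _ => sum_congr rfl fun s' _ => by ring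

lemma sum_stateDist (hP1 : ∀ s a, ∑ s', P s a s' = 1) (hρ1 : ∑ s, ρ s = 1)
    (hπ1 : ∀ s, ∑ a, π s a = 1) (t : ℕ) : ∑ s, stateDist P π ρ t s = 1 := by
  induction t with
  | zero => exact hρ1
  | succ t ih =>
    simpa only [mul_one, hP1, hπ1, ih] using sum_stateDist_mul_succ P π ρ (fun _ => 1) t

variable {P π ρ}

lemma stateDist_le_one (hP0 : ∀ s a s', 0 ≤ P s a s') (hP1 : ∀ s a, ∑ s', P s a s' = 1)
    (hρ0 : ∀ s, 0 ≤ ρ s) (hρ1 : ∑ s, ρ s = 1)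
    (hπ0 : ∀ s a, 0 ≤ π s a) (hπ1 : ∀ s, ∑ a, π s a = 1) (t : ℕ) (s : S) :
    stateDist P π ρ t s ≤ 1 :=
  sum_stateDist P π ρ hP1 hρ1 hπ1 t ▸
    single_le_sum (fun s _ => stateDist_nonneg P π ρ hP0 hρ0 hπ0 t s) (mem_univ s)

lemma abs_sum_stateDist_mul_le (hP0 : ∀ s a s', 0 ≤ P s a s')
    (hP1 : ∀ s a, ∑ s', P s a s' = 1) (hρ0 : ∀ s, 0 ≤ ρ s) (hρ1 : ∑ s, ρ s = 1)
    (hπ0 : ∀ s a, 0 ≤ π s a) (hπ1 : ∀ s, ∑ a, π s a = 1) (f : S → ℝ) (t : ℕ) :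
    |∑ s, stateDist P π ρ t s * f s| ≤ ∑ s, |f s| := by
  refine (abs_sum_le_sum_abs _ _).trans (sum_le_sum fun s _ => ?_)
  rw [abs_mul, abs_of_nonneg (stateDist_nonneg P π ρ hP0 hρ0 hπ0 t s)]
  exact mul_le_of_le_one_left (abs_nonneg _) (stateDist_le_one hP0 hP1 hρ0 hρ1 hπ0 hπ1 t s)

lemma sum_dvisit_mul {γ : ℝ} (hγ0 : 0 ≤ γ) (hγ1 : γ < 1) (hP0 : ∀ s a s', 0 ≤ P s a s')
    (hP1 : ∀ s a, ∑ s', P s a s' = 1) (hρ0 : ∀ s, 0 ≤ ρ s) (hρ1 : ∑ s, ρ s = 1)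
    (hπ0 : ∀ s a, 0 ≤ π s a) (hπ1 : ∀ s, ∑ a, π s a = 1) (f : S → ℝ) :
    ∑ s, dvisit P π ρ γ s * f s
      = (1 - γ) * ∑' t, γ ^ t * ∑ s, stateDist P π ρ t s * f s := by
  have summable (s : S) :
      Summable fun t => (1 - γ) * (γ ^ t * (stateDist P π ρ t s * f s)) := by
    have visits : Summable fun t => γ ^ t * stateDist P π ρ t s :=
      (summable_geometric_of_lt_one hγ0 hγ1).of_nonneg_of_le
        (fun t => mul_nonneg (pow_nonneg hγ0 t) (stateDist_nonneg P π ρ hP0 hρ0 hπ0 t s))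
        fun t => mul_le_of_le_one_right (pow_nonneg hγ0 t)
          (stateDist_le_one hP0 hP1 hρ0 hρ1 hπ0 hπ1 t s)
    simpa only [mul_assoc] using (visits.mul_right (f s)).mul_left (1 - γ)
  simp only [dvisit, mul_sum, mul_assoc, ← tsum_mul_right, ← tsum_mul_left]
  exact (Summable.tsum_finsetSum fun s _ => summable s).symm

end StateDistribution

lemma tsum_geometric_mul_sub_eq {γ : ℝ} (hγ0 : 0 ≤ γ) (hγ1 : γ < 1) {x : ℕ → ℝ} {C : ℝ}
    (hx : ∀ t, |x t| ≤ C) : ∑' t, γ ^ t * (x t - γ * x (t + 1)) = x 0 := by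
  have summable : Summable fun t => γ ^ t * x t :=
    .of_norm_bounded ((summable_geometric_of_lt_one hγ0 hγ1).mul_right C) fun t => by
      rw [Real.norm_eq_abs, abs_mul, abs_of_nonneg (pow_nonneg hγ0 t)]
      exact mul_le_mul_of_nonneg_left (hx t) (pow_nonneg hγ0 t)
  have shifted : Summable fun t => γ ^ (t + 1) * x (t + 1) :=
    (summable_nat_add_iff 1).mpr summable
  calc ∑' t, γ ^ t * (x t - γ * x (t + 1))
      = ∑' t, γ ^ t * x t - ∑' t, γ ^ (t + 1) * x (t + 1) := by
        rw [← summable.tsum_sub shifted]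
        exact tsum_congr fun t => by ring
    _ = x 0 := by rw [summable.tsum_eq_zero_add]; simp

lemma sum_mul_advantage_eq (P : S → A → S → ℝ) (r : S → A → ℝ) (γ : ℝ) (π : S → A → ℝ)
    (hπ1 : ∀ s, ∑ a, π s a = 1) (V V' : S → ℝ)
    (hV' : ∀ s, V' s = ∑ a, π s a * (r s a + γ * ∑ s', P s a s' * V' s')) (s : S) :
    ∑ a, π s a * ((r s a + γ * ∑ s', P s a s' * V s') - V s)
      = (V' s - V s) - γ * ∑ a, π s a * ∑ s', P s a s' * (V' s' - V s') := by
  calc ∑ a, π s a * ((r s a + γ * ∑ s', P s a s' * V s') - V s)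
      = ∑ a, (π s a * (r s a + γ * ∑ s', P s a s' * V' s')
          - γ * (π s a * ∑ s', P s a s' * (V' s' - V s')) - π s a * V s) :=
        sum_congr rfl fun a _ => by simp only [mul_sub, sum_sub_distrib]; ring
    _ = _ := by rw [sum_sub_distrib, sum_sub_distrib, ← sum_mul, hπ1, ← mul_sum, ← hV' s]; ring

theorem performance_difference {γ : ℝ} (hγ0 : 0 ≤ γ) (hγ1 : γ < 1)
    (P : S → A → S → ℝ) (r : S → A → ℝ) (ρ : S → ℝ)
    (hP0 : ∀ s a s', 0 ≤ P s a s') (hP1 : ∀ s a, ∑ s', P s a s' = 1)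
    (hρ0 : ∀ s, 0 ≤ ρ s) (hρ1 : ∑ s, ρ s = 1)
    (π : S → A → ℝ) (hπ0 : ∀ s a, 0 ≤ π s a) (hπ1 : ∀ s, ∑ a, π s a = 1) (V V' : S → ℝ)
    (hV' : ∀ s, V' s = ∑ a, π s a * (r s a + γ * ∑ s', P s a s' * V' s')) :
    ∑ s, dvisit P π ρ γ s * ∑ a, π s a * ((r s a + γ * ∑ s', P s a s' * V s') - V s)
      = (1 - γ) * ∑ s, ρ s * V' s - (1 - γ) * ∑ s, ρ s * V s := by
  set x : ℕ → ℝ := fun t => ∑ s, stateDist P π ρ t s * (V' s - V s)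
  have telescoping (t : ℕ) :
      ∑ s, stateDist P π ρ t s * ∑ a, π s a * ((r s a + γ * ∑ s', P s a s' * V s') - V s)
        = x t - γ * x (t + 1) := by
    simp only [x, sum_mul_advantage_eq P r γ π hπ1 V V' hV', sum_stateDist_mul_succ]
    rw [mul_sum, ← sum_sub_distrib]
    exact sum_congr rfl fun s _ => by ring
  rw [sum_dvisit_mul hγ0 hγ1 hP0 hP1 hρ0 hρ1 hπ0 hπ1, tsum_congr fun t => by rw [telescoping],
    tsum_geometric_mul_sub_eq hγ0 hγ1
      (abs_sum_stateDist_mul_le hP0 hP1 hρ0 hρ1 hπ0 hπ1 (fun s => V' s - V s))]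
  simp only [stateDist, mul_sub, sum_sub_distrib]

lemma sum_mul_sub_sum_mul_le_sup'_abs_mul_dTV {X : Type*} [Fintype X] [Nonempty X]
    (p q g : X → ℝ) :
    ∑ x, q x * g x - ∑ x, p x * g x ≤ univ.sup' univ_nonempty (fun x => |g x|) * dTV p q := by
  rw [dTV, mul_sum, ← sum_sub_distrib]
  refine sum_le_sum fun x _ => ?_
  calc q x * g x - p x * g x ≤ |q x - p x| * |g x| := by
        rw [← sub_mul, ← abs_mul]; exact le_abs_self _
    _ ≤ univ.sup' univ_nonempty (fun x => |g x|) * |p x - q x| := by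
        rw [abs_sub_comm, mul_comm]
        exact mul_le_mul_of_nonneg_right (le_sup' (fun x => |g x|) (mem_univ x)) (abs_nonneg _)

theorem surrogate_lower_bound_general
    [Nonempty S]
    (P : S → A → S → ℝ) (r : S → A → ℝ) (γ : ℝ) (ρ : S → ℝ)
    (hγ0 : 0 ≤ γ) (hγ1 : γ < 1)
    (hP0 : ∀ s a s', 0 ≤ P s a s') (hP1 : ∀ s a, ∑ s', P s a s' = 1)
    (hρ0 : ∀ s, 0 ≤ ρ s) (hρ1 : ∑ s, ρ s = 1)
    (π π' : S → A → ℝ)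
    (hπ'0 : ∀ s a, 0 ≤ π' s a) (hπ'1 : ∀ s, ∑ a, π' s a = 1)
    (V V' : S → ℝ)
    (hV' : ∀ s, V' s = ∑ a, π' s a * (r s a + γ * ∑ s', P s a s' * V' s')) :
    (1 - γ) * ∑ s, ρ s * V' s
      ≥ ((1 - γ) * ∑ s, ρ s * V s
          + ∑ s, dvisit P π ρ γ s *
              ∑ a, π' s a * ((r s a + γ * ∑ s', P s a s' * V s') - V s))
        - (Finset.univ.sup' Finset.univ_nonempty
              (fun s => |∑ a, π' s a * ((r s a + γ * ∑ s', P s a s' * V s') - V s)|))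
          * dTV (dvisit P π' ρ γ) (dvisit P π ρ γ) := by
  have difference := performance_difference hγ0 hγ1 P r ρ hP0 hP1 hρ0 hρ1 π' hπ'0 hπ'1 V V' hV'
  have mismatch := sum_mul_sub_sum_mul_le_sup'_abs_mul_dTV (dvisit P π' ρ γ) (dvisit P π ρ γ)
    (fun s => ∑ a, π' s a * ((r s a + γ * ∑ s', P s a s' * V s') - V s))
  linarith

/-- `J(π') ≥ L_π(π') − ε^π · D_TV(d^{π'}_ρ ‖ d^π_ρ)` where
`ε^π = max_s |∑_a π'(a|s) A^π(s,a)|`. -/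
theorem surrogate_lower_bound
    [Nonempty S] [Nonempty A]
    (P : S → A → S → ℝ) (r : S → A → ℝ) (γ : ℝ) (ρ : S → ℝ)
    (hγ0 : 0 ≤ γ) (hγ1 : γ < 1)
    (hP0 : ∀ s a s', 0 ≤ P s a s') (hP1 : ∀ s a, ∑ s', P s a s' = 1)
    (hρ0 : ∀ s, 0 ≤ ρ s) (hρ1 : ∑ s, ρ s = 1)
    (π π' : S → A → ℝ)
    (hπ0 : ∀ s a, 0 ≤ π s a) (hπ1 : ∀ s, ∑ a, π s a = 1)
    (hπ'0 : ∀ s a, 0 ≤ π' s a) (hπ'1 : ∀ s, ∑ a, π' s a = 1)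
    (V V' : S → ℝ)
    (hV : ∀ s, V s = ∑ a, π s a * (r s a + γ * ∑ s', P s a s' * V s'))
    (hV' : ∀ s, V' s = ∑ a, π' s a * (r s a + γ * ∑ s', P s a s' * V' s')) :
    (1 - γ) * ∑ s, ρ s * V' s
      ≥ ((1 - γ) * ∑ s, ρ s * V s
          + ∑ s, dvisit P π ρ γ s *
              ∑ a, π' s a * ((r s a + γ * ∑ s', P s a s' * V s') - V s))
        - (Finset.univ.sup' Finset.univ_nonempty
              (fun s => |∑ a, π' s a * ((r s a + γ * ∑ s', P s a s' * V s') - V s)|))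
          * dTV (dvisit P π' ρ γ) (dvisit P π ρ γ) :=
  surrogate_lower_bound_general P r γ ρ hγ0 hγ1 hP0 hP1 hρ0 hρ1 π π' hπ'0 hπ'1 V V' hV'
end
end

section
/- For all policies π and π' of a finite discounted MDP, D_TV(d^{π'}_ρ ‖ d^π_ρ) ≤ (2γ/(1−γ)) · ∑_{s∈S} d^π_ρ(s) · D_TV(π'(·|s) ‖ π(·|s)). -/
open Finset

noncomputable section

variable {S A : Type*} [Fintype S] [Fintype A]

/-
The discounted visitation distribution is the fixed point of the flow equation
`d = (1 - γ) ρ + γ T_π d`, where `T_π μ (s') = ∑ s a, μ s π(a|s) P(s'|s,a)` is one step of the chain.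
Subtracting the equations for `π'` and `π` gives `d' - d = γ (T_π' d' - T_π d)`. Since `T_π'` is an
`ℓ¹`-contraction, `‖T_π' d' - T_π d‖₁ ≤ ‖d' - d‖₁ + ∑ s, d s ‖π'(·|s) - π(·|s)‖₁`, hence
`(1 - γ) ‖d' - d‖₁ ≤ γ ∑ s, d s ‖π'(·|s) - π(·|s)‖₁`.
-/

def transition (P : S → A → S → ℝ) (π : S → A → ℝ) (μ : S → ℝ) (s' : S) : ℝ :=
  ∑ s, ∑ a, μ s * π s a * P s a s'

section

variable {P : S → A → S → ℝ} {π π' : S → A → ℝ} {ρ : S → ℝ} {γ : ℝ}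

theorem stateDist_succ (t : ℕ) :
    stateDist P π ρ (t + 1) = transition P π (stateDist P π ρ t) :=
  rfl

theorem transition_const_mul (c : ℝ) (μ : S → ℝ) (s' : S) :
    transition P π (fun s => c * μ s) s' = c * transition P π μ s' := by
  simp only [transition, mul_sum, mul_assoc]

theorem transition_tsum {f : ℕ → S → ℝ} (hf : ∀ s, Summable fun t => f t s) (s' : S) :
    transition P π (fun s => ∑' t, f t s) s' = ∑' t, transition P π (f t) s' := by
  have hterm : ∀ s a, Summable fun t => f t s * π s a * P s a s' :=
    fun s a => ((hf s).mul_right _).mul_right _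
  simp only [transition, ← tsum_mul_right]
  rw [Summable.tsum_finsetSum fun s _ => summable_sum fun a _ => hterm s a]
  exact sum_congr rfl fun s _ => (Summable.tsum_finsetSum fun a _ => hterm s a).symm

theorem transition_mem_stdSimplex (hP : ∀ s a, P s a ∈ stdSimplex ℝ S)
    (hπ : ∀ s, π s ∈ stdSimplex ℝ A) {μ : S → ℝ} (hμ : μ ∈ stdSimplex ℝ S) :
    transition P π μ ∈ stdSimplex ℝ S := by
  refine ⟨fun s' => sum_nonneg fun s _ => sum_nonneg fun a _ =>
    mul_nonneg (mul_nonneg (hμ.1 s) ((hπ s).1 a)) ((hP s a).1 s'), ?_⟩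
  calc ∑ s', transition P π μ s' = ∑ s, ∑ a, ∑ s', μ s * π s a * P s a s' := by
        simp only [transition]
        rw [sum_comm]
        exact sum_congr rfl fun s _ => sum_comm
      _ = 1 := by simp only [← mul_sum, (hP _ _).2, (hπ _).2, mul_one, hμ.2]

theorem stateDist_mem_stdSimplex (hP : ∀ s a, P s a ∈ stdSimplex ℝ S)
    (hπ : ∀ s, π s ∈ stdSimplex ℝ A) (hρ : ρ ∈ stdSimplex ℝ S) :
    ∀ t, stateDist P π ρ t ∈ stdSimplex ℝ S
  | 0 => hρ
  | t + 1 => transition_mem_stdSimplex hP hπ (stateDist_mem_stdSimplex hP hπ hρ t)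

theorem summable_pow_mul_stateDist (hγ0 : 0 ≤ γ) (hγ1 : γ < 1)
    (hP : ∀ s a, P s a ∈ stdSimplex ℝ S) (hπ : ∀ s, π s ∈ stdSimplex ℝ A)
    (hρ : ρ ∈ stdSimplex ℝ S) (s : S) :
    Summable fun t => γ ^ t * stateDist P π ρ t s := by
  have hmem := stateDist_mem_stdSimplex hP hπ hρ
  refine (summable_geometric_of_lt_one hγ0 hγ1).of_nonneg_of_le
    (fun t => mul_nonneg (pow_nonneg hγ0 t) ((hmem t).1 s)) fun t => ?_
  exact mul_le_of_le_one_right (pow_nonneg hγ0 t) (mem_Icc_of_mem_stdSimplex (hmem t) s).2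

theorem dvisit_nonneg (hγ0 : 0 ≤ γ) (hγ1 : γ ≤ 1) (hP : ∀ s a, P s a ∈ stdSimplex ℝ S)
    (hπ : ∀ s, π s ∈ stdSimplex ℝ A) (hρ : ρ ∈ stdSimplex ℝ S) (s : S) :
    0 ≤ dvisit P π ρ γ s :=
  mul_nonneg (sub_nonneg.2 hγ1) <| tsum_nonneg fun t =>
    mul_nonneg (pow_nonneg hγ0 t) ((stateDist_mem_stdSimplex hP hπ hρ t).1 s)

theorem dvisit_eq_add_transition (hγ0 : 0 ≤ γ) (hγ1 : γ < 1)
    (hP : ∀ s a, P s a ∈ stdSimplex ℝ S) (hπ : ∀ s, π s ∈ stdSimplex ℝ A)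
    (hρ : ρ ∈ stdSimplex ℝ S) (s' : S) :
    dvisit P π ρ γ s' = (1 - γ) * ρ s' + γ * transition P π (dvisit P π ρ γ) s' := by
  have hsum := summable_pow_mul_stateDist hγ0 hγ1 hP hπ hρ
  have hpush : transition P π (dvisit P π ρ γ) s'
      = (1 - γ) * ∑' t, γ ^ t * stateDist P π ρ (t + 1) s' := by
    unfold dvisit
    rw [transition_const_mul, transition_tsum hsum]
    simp only [transition_const_mul, stateDist_succ]
  have hshift : ∑' t, γ ^ (t + 1) * stateDist P π ρ (t + 1) s'
      = γ * ∑' t, γ ^ t * stateDist P π ρ (t + 1) s' := by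
    simp only [pow_succ', mul_assoc, tsum_mul_left]
  rw [hpush, dvisit, (hsum s').tsum_eq_zero_add, hshift]
  simp only [pow_zero, one_mul, stateDist]
  ring

theorem dTV_transition_le (hP : ∀ s a, P s a ∈ stdSimplex ℝ S)
    (hπ' : ∀ s, π' s ∈ stdSimplex ℝ A) (μ : S → ℝ) {ν : S → ℝ} (hν : ∀ s, 0 ≤ ν s) :
    dTV (transition P π' μ) (transition P π ν) ≤ dTV μ ν + ∑ s, ν s * dTV (π' s) (π s) := by
  have hsplit : ∀ s a, |μ s * π' s a - ν s * π s a|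
      ≤ |μ s - ν s| * π' s a + ν s * |π' s a - π s a| := by
    intro s a
    calc |μ s * π' s a - ν s * π s a|
        = |(μ s - ν s) * π' s a + ν s * (π' s a - π s a)| := by ring_nf
      _ ≤ _ := by
        grw [abs_add_le, abs_mul, abs_mul, abs_of_nonneg ((hπ' s).1 a), abs_of_nonneg (hν s)]
  calc dTV (transition P π' μ) (transition P π ν)
      = ∑ s', |∑ s, ∑ a, (μ s * π' s a - ν s * π s a) * P s a s'| := by
        simp only [dTV, transition, ← sum_sub_distrib, sub_mul]
    _ ≤ ∑ s', ∑ s, ∑ a, |μ s * π' s a - ν s * π s a| * P s a s' := by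
        gcongr with s'
        refine (abs_sum_le_sum_abs _ _).trans (sum_le_sum fun s _ => ?_)
        refine (abs_sum_le_sum_abs _ _).trans (le_of_eq (sum_congr rfl fun a _ => ?_))
        rw [abs_mul, abs_of_nonneg ((hP s a).1 s')]
    _ = ∑ s, ∑ a, |μ s * π' s a - ν s * π s a| := by
        rw [sum_comm]
        refine sum_congr rfl fun s _ => ?_
        rw [sum_comm]
        simp only [← mul_sum, (hP _ _).2, mul_one]
    _ ≤ ∑ s, ∑ a, (|μ s - ν s| * π' s a + ν s * |π' s a - π s a|) := by
        gcongr with s _ a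
        exact hsplit s a
    _ = dTV μ ν + ∑ s, ν s * dTV (π' s) (π s) := by
        simp only [sum_add_distrib, ← mul_sum, (hπ' _).2, mul_one, dTV]

end

theorem visitation_tv_bound_general
    (P : S → A → S → ℝ) (γ : ℝ) (ρ : S → ℝ)
    (hγ0 : 0 ≤ γ) (hγ1 : γ < 1)
    (hP0 : ∀ s a s', 0 ≤ P s a s') (hP1 : ∀ s a, ∑ s', P s a s' = 1)
    (hρ0 : ∀ s, 0 ≤ ρ s) (hρ1 : ∑ s, ρ s = 1)
    (π π' : S → A → ℝ)
    (hπ0 : ∀ s a, 0 ≤ π s a) (hπ1 : ∀ s, ∑ a, π s a = 1)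
    (hπ'0 : ∀ s a, 0 ≤ π' s a) (hπ'1 : ∀ s, ∑ a, π' s a = 1) :
    dTV (dvisit P π' ρ γ) (dvisit P π ρ γ)
      ≤ (2 * γ / (1 - γ)) * ∑ s, dvisit P π ρ γ s * dTV (π' s) (π s) := by
  have hP : ∀ s a, P s a ∈ stdSimplex ℝ S := fun s a => ⟨hP0 s a, hP1 s a⟩
  have hρ : ρ ∈ stdSimplex ℝ S := ⟨hρ0, hρ1⟩
  have hπ : ∀ s, π s ∈ stdSimplex ℝ A := fun s => ⟨hπ0 s, hπ1 s⟩
  have hπ' : ∀ s, π' s ∈ stdSimplex ℝ A := fun s => ⟨hπ'0 s, hπ'1 s⟩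
  set d := dvisit P π ρ γ
  set d' := dvisit P π' ρ γ
  set E := ∑ s, d s * dTV (π' s) (π s)
  have hd : ∀ s, 0 ≤ d s := dvisit_nonneg hγ0 hγ1.le hP hπ hρ
  have hE : 0 ≤ E := sum_nonneg fun s _ => mul_nonneg (hd s) (sum_nonneg fun a _ => abs_nonneg _)
  have hdiff : ∀ s, d' s - d s = γ * (transition P π' d' s - transition P π d s) := fun s => by
    linear_combination dvisit_eq_add_transition hγ0 hγ1 hP hπ' hρ s
      - dvisit_eq_add_transition hγ0 hγ1 hP hπ hρ s
  have hcontract : dTV d' d ≤ γ * (dTV d' d + E) := calc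
    dTV d' d = γ * dTV (transition P π' d') (transition P π d) := by
      simp only [dTV, hdiff, abs_mul, abs_of_nonneg hγ0, mul_sum]
    _ ≤ γ * (dTV d' d + E) := by gcongr; exact dTV_transition_le hP hπ' d' hd
  rw [div_mul_eq_mul_div, le_div_iff₀ (sub_pos.2 hγ1)]
  linarith [mul_nonneg hγ0 hE]

/-- `D_TV(d^{π'}_ρ ‖ d^π_ρ) ≤ (2γ/(1−γ)) · E_{s ~ d^π_ρ}[ D_TV(π'(·|s) ‖ π(·|s)) ]`. -/
theorem visitation_tv_bound
    [Nonempty S] [Nonempty A]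
    (P : S → A → S → ℝ) (γ : ℝ) (ρ : S → ℝ)
    (hγ0 : 0 ≤ γ) (hγ1 : γ < 1)
    (hP0 : ∀ s a s', 0 ≤ P s a s') (hP1 : ∀ s a, ∑ s', P s a s' = 1)
    (hρ0 : ∀ s, 0 ≤ ρ s) (hρ1 : ∑ s, ρ s = 1)
    (π π' : S → A → ℝ)
    (hπ0 : ∀ s a, 0 ≤ π s a) (hπ1 : ∀ s, ∑ a, π s a = 1)
    (hπ'0 : ∀ s a, 0 ≤ π' s a) (hπ'1 : ∀ s, ∑ a, π' s a = 1) :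
    dTV (dvisit P π' ρ γ) (dvisit P π ρ γ)
      ≤ (2 * γ / (1 - γ)) * ∑ s, dvisit P π ρ γ s * dTV (π' s) (π s) :=
  visitation_tv_bound_general P γ ρ hγ0 hγ1 hP0 hP1 hρ0 hρ1 π π' hπ0 hπ1 hπ'0 hπ'1
end
end
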